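/- Let G and H be digraphs with N = max{χ⃗(G), χ⃗(H)}, and let f_G, f_H be proper N-colourings of G and H respectively. Then the colouring f(g,h) ≡ f_G(g) + f_H(h) (mod N) is a proper N-colouring of the Cartesian product G □ H, i.e., no colour class of f contains a directed cycle. -/

import Mathlib

def HasDicycleOn {V : Type*} (r : V → V → Prop) (S : Set V) : Prop :=
  ∃ (m : ℕ) (f : ZMod (m + 1) → V), Function.Injective f ∧
    (∀ i, f i ∈ S) ∧ ∀ i, r (f i) (f (i + 1))

def IsAcyclicOn {V : Type*} (r : V → V → Prop) (S : Set V) : Prop :=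
  ¬ HasDicycleOn r S

def IsProperDicoloring {V : Type*} (r : V → V → Prop) {k : ℕ} (f : V → Fin k) : Prop :=
  ∀ c, IsAcyclicOn r {v | f v = c}

def Dicolorable {V : Type*} (r : V → V → Prop) (k : ℕ) : Prop :=
  ∃ f : V → Fin k, IsProperDicoloring r f

noncomputable def dichromaticNumber {V : Type*} (r : V → V → Prop) : ℕ :=
  sInf {k | Dicolorable r k}

def cartesianProduct {VG VH : Type*} (G : VG → VG → Prop) (H : VH → VH → Prop)
    (p q : VG × VH) : Prop :=
  (p.1 = q.1 ∧ H p.2 q.2) ∨ (p.2 = q.2 ∧ G p.1 q.1)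

/-!
Along an arc of `G □ H` one coordinate stays fixed, so its colour stays fixed, and then the
colour of the other coordinate is fixed too because the sum is. Hence on a monochromatic
dicycle of `G □ H` both coordinate colours are constant. The first arc moves in one factor,
and the projection of the dicycle to that factor is a closed walk, possibly pausing, with at
least one real arc, inside one colour class there. A shortest closed sub-walk of it is a
dicycle, contradicting properness of the colouring of that factor.
-/

open Relation

theorem ZMod.apply_eq_apply_zero_of_forall_add_one {β : Type*} {n : ℕ} [NeZero n]
    {u : ZMod n → β} (h : ∀ i, u (i + 1) = u i) (i : ZMod n) : u i = u 0 := by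
  rw [← ZMod.natCast_zmod_val i]
  induction i.val with
  | zero => simp
  | succ k ih => rw [Nat.cast_succ, h, ih]

section Dicycle

variable {V : Type*} {r : V → V → Prop} {S : Set V}

theorem exists_walk_of_transGen {R : V → V → Prop} {a b : V} (h : TransGen R a b) :
    ∃ L, 0 < L ∧ ∃ w : ℕ → V, w 0 = a ∧ w L = b ∧ ∀ i < L, R (w i) (w (i + 1)) := by
  induction h with
  | single hab =>
    refine ⟨1, one_pos, fun i => if i = 0 then a else _, rfl, rfl, fun i hi => ?_⟩
    obtain rfl : i = 0 := by omega
    simpa using hab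
  | @tail b c _ hbc ih =>
    obtain ⟨L, hL, w, hw0, hwL, hw⟩ := ih
    refine ⟨L + 1, L.succ_pos, fun i => if i ≤ L then w i else c, by simp [hw0], by simp, ?_⟩
    intro i hi
    rcases Nat.lt_or_ge i L with hlt | hge
    · simpa [hlt.le, Nat.succ_le_of_lt hlt] using hw i hlt
    · obtain rfl : i = L := by omega
      simpa [hwL] using hbc

theorem hasDicycleOn_of_closedWalk_injOn {m : ℕ} {w : ℕ → V}
    (hw : ∀ i ≤ m, w i ∈ S ∧ r (w i) (w (i + 1))) (hclosed : w (m + 1) = w 0)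
    (hinj : Set.InjOn w (Set.Iic m)) : HasDicycleOn r S := by
  have hval : ∀ k : ZMod (m + 1), k.val ≤ m := fun k => Nat.lt_succ_iff.mp k.val_lt
  refine ⟨m, fun k => w k.val, fun a b hab => ZMod.val_injective _ (hinj (hval a) (hval b) hab),
    fun k => (hw _ (hval k)).1, fun k => ?_⟩
  have hsucc : (k + 1).val = (k.val + 1) % (m + 1) := by
    rw [← ZMod.val_natCast, Nat.cast_succ, ZMod.natCast_zmod_val]
  have hnext : w (k + 1).val = w (k.val + 1) := by
    rcases (hval k).lt_or_eq with hlt | heq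
    · rw [hsucc, Nat.mod_eq_of_lt (by omega)]
    · rw [hsucc, heq, Nat.mod_self, hclosed]
  simpa only [hnext] using (hw _ (hval k)).2

theorem hasDicycleOn_of_closedWalk {L : ℕ} (hL : 0 < L) {w : ℕ → V}
    (hw : ∀ i < L, w i ∈ S ∧ r (w i) (w (i + 1))) (hclosed : w L = w 0) :
    HasDicycleOn r S := by
  induction L using Nat.strong_induction_on generalizing w with
  | _ L ih =>
  obtain ⟨m, rfl⟩ := Nat.exists_eq_add_one_of_ne_zero hL.ne'
  by_cases hinj : Set.InjOn w (Set.Iic m)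
  · exact hasDicycleOn_of_closedWalk_injOn (fun i hi => hw i (by omega)) hclosed hinj
  -- a repeated vertex `w i = w j` cuts out the shorter closed walk `w i, …, w j`
  have shorten : ∀ i j, i < j → j ≤ m → w i = w j → HasDicycleOn r S := fun i j hij hj heq =>
    ih (j - i) (by omega) (by omega) (w := fun k => w (i + k))
      (fun k hk => by simpa only [Nat.add_assoc] using hw (i + k) (by omega))
      (by simp [Nat.add_sub_cancel' hij.le, heq])
  simp only [Set.InjOn, Set.mem_Iic, not_forall] at hinj
  obtain ⟨i, hi, j, hj, heq, hne⟩ := hinj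
  rcases Nat.lt_or_gt_of_ne hne with hij | hji
  · exact shorten i j hij hj heq
  · exact shorten j i hji hi heq.symm

theorem hasDicycleOn_of_transGen {v : V} (h : TransGen (fun x y => x ∈ S ∧ r x y) v v) :
    HasDicycleOn r S := by
  obtain ⟨L, hL, w, hw0, hwL, hw⟩ := exists_walk_of_transGen h
  exact hasDicycleOn_of_closedWalk hL hw (hwL.trans hw0.symm)

theorem hasDicycleOn_of_lazyCycle {m : ℕ} {u : ZMod (m + 1) → V} (hS : ∀ i, u i ∈ S)
    (hu : ∀ i, u i = u (i + 1) ∨ r (u i) (u (i + 1))) {i₀ : ZMod (m + 1)}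
    (h₀ : r (u i₀) (u (i₀ + 1))) : HasDicycleOn r S := by
  have hreach : ∀ i (k : ℕ), ReflTransGen (fun x y => x ∈ S ∧ r x y) (u i) (u (i + k)) := by
    intro i k
    induction k with
    | zero => simpa using ReflTransGen.refl
    | succ k ih =>
      rw [Nat.cast_succ, ← add_assoc]
      rcases hu (i + k) with heq | harc
      · rwa [← heq]
      · exact ih.tail ⟨hS _, harc⟩
  have hback : i₀ + 1 + (m : ZMod (m + 1)) = i₀ := by
    rw [add_assoc, add_comm 1, ← Nat.cast_succ, ZMod.natCast_self, add_zero]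
  refine hasDicycleOn_of_transGen (v := u i₀) (TransGen.head' ⟨hS _, h₀⟩ ?_)
  simpa only [hback] using hreach (i₀ + 1) m

end Dicycle

namespace cartesianProduct

variable {VG VH : Type*} {G : VG → VG → Prop} {H : VH → VH → Prop} {p q : VG × VH}

theorem fst_eq_or (h : cartesianProduct G H p q) : p.1 = q.1 ∨ G p.1 q.1 :=
  h.imp And.left And.right

theorem snd_eq_or (h : cartesianProduct G H p q) : p.2 = q.2 ∨ H p.2 q.2 :=
  (h.imp And.right And.left).symm

theorem colors_eq_of_add_eq {α : Type*} [Add α] [IsCancelAdd α] {cG : VG → α} {cH : VH → α}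
    (h : cartesianProduct G H p q) (hc : cG p.1 + cH p.2 = cG q.1 + cH q.2) :
    cG p.1 = cG q.1 ∧ cH p.2 = cH q.2 := by
  rcases h with ⟨h1, -⟩ | ⟨h2, -⟩
  · rw [h1] at hc ⊢
    exact ⟨rfl, add_left_cancel hc⟩
  · rw [h2] at hc ⊢
    exact ⟨add_right_cancel hc, rfl⟩

end cartesianProduct

theorem sum_mod_coloring_proper_general {VG VH : Type*}
    (G : VG → VG → Prop) (H : VH → VH → Prop) (N : ℕ)
    (fG : VG → Fin N) (fH : VH → Fin N)
    (hfG : IsProperDicoloring G fG) (hfH : IsProperDicoloring H fH) :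
    IsProperDicoloring (cartesianProduct G H) (fun p => fG p.1 + fH p.2) := by
  rintro c ⟨m, f, -, hcol, harc⟩
  have hstep : ∀ i, fG (f (i + 1)).1 = fG (f i).1 ∧ fH (f (i + 1)).2 = fH (f i).2 := fun i =>
    ((harc i).colors_eq_of_add_eq ((hcol i).trans (hcol (i + 1)).symm)).imp Eq.symm Eq.symm
  rcases harc 0 with ⟨-, hH⟩ | ⟨-, hG⟩
  · exact hfH _ (hasDicycleOn_of_lazyCycle (u := fun i => (f i).2)
      (ZMod.apply_eq_apply_zero_of_forall_add_one fun i => (hstep i).2)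
      (fun i => (harc i).snd_eq_or) hH)
  · exact hfG _ (hasDicycleOn_of_lazyCycle (u := fun i => (f i).1)
      (ZMod.apply_eq_apply_zero_of_forall_add_one fun i => (hstep i).1)
      (fun i => (harc i).fst_eq_or) hG)

/-- With `N = max {χ⃗(G), χ⃗(H)}` and proper `N`-colourings `f_G, f_H` of `G, H`,
the colouring `(g,h) ↦ f_G(g) + f_H(h) (mod N)` is a proper `N`-colouring of `G □ H`. -/
theorem sum_mod_coloring_proper {VG VH : Type*} [Fintype VG] [Fintype VH]
    (G : VG → VG → Prop) (H : VH → VH → Prop) (N : ℕ)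
    (hN : N = max (dichromaticNumber G) (dichromaticNumber H))
    (fG : VG → Fin N) (fH : VH → Fin N)
    (hfG : IsProperDicoloring G fG) (hfH : IsProperDicoloring H fH) :
    IsProperDicoloring (cartesianProduct G H) (fun p => fG p.1 + fH p.2) :=
  sum_mod_coloring_proper_general G H N fG fH hfG hfH
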